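/- Let D and E be adjacent horizontal-type derivations: D has marked point z₀ = 0 and parameters (e, s, d, u), so D(f·χ^m) = t^s·(⟨m,u⟩·f + d·t·f′)·χ^{m+e}, and E has marked point 0, parameters (ẽ, s̃, d, u) with the same d and u, and twist family (w_z)_{z≠0}, so E(f·χ^m) = t^{s̃}·φ^{ẽ}·(⟨m,u⟩·f + d·(t·f′ − α_m·f))·χ^{m+ẽ}. Assume d·s = −1 − ⟨e,u⟩, d·s̃ = −1 − ⟨ẽ,u⟩, and for every z ≠ 0 with w_z ≠ 0 one has ⟨e,w_z⟩ ≥ 1 and ⟨ẽ,w_z⟩ ≤ −1. Then D and E commute on B if and only if one of the following holds: (1) w_z = 0 for all z ≠ 0; (2) d = 1 (so that the common marked vertex v₀ = u lies in ℤⁿ) and there is exactly one point z₁ ≠ 0 with w_{z₁} ≠ 0, and this w_{z₁} satisfies ⟨e,w_{z₁}⟩ = 1 and ⟨ẽ,w_{z₁}⟩ = −1. -/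

import Mathlib

/-!
On a monomial `f·χ^m` the commutator `DE - ED` is `d·t^(s+s')·φ^{e'}` times
`(α_m (1 - d α_{e'}) - d t α_m' + ⟨m,u⟩ B) f + d B t f'` in degree `m + e + e'`, where
`B = α_e + α_{e'}`: the Demazure relations `d s = -1 - ⟨e,u⟩`, `d s' = -1 - ⟨e',u⟩` are exactly
what cancels the terms coming from differentiating `t^s` and `t^{s'}`. Hence `D` and `E` commute
iff `B = 0` and `α_m (1 - d α_{e'}) = d t α_m'` for all `m`.

For `m = e` and `B = 0` this is a Riccati equation for `α_e = -t ψ'/ψ`, where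
`ψ = ∏ (t - z)^{⟨e,w_z⟩}` is a polynomial by coherency. It linearises to the Euler equation
`d θ²ψ = θψ` with `θ = t d/dt`, and comparing leading coefficients gives `d · deg ψ = 1`.
So `d = 1` and `ψ = t - z₁`, and `B = 0` then forces `⟨e',w_{z₁}⟩ = -1`.
-/

noncomputable section

/-- standard pairing `⟨m,v⟩ = Σᵢ mᵢ vᵢ` on `ℤⁿ`. -/
def pairZ {n : ℕ} (m v : Fin n → ℤ) : ℤ := ∑ i, m i * v i

/-- derivative `f ↦ df/dt` of a rational function `f ∈ K(t)`. -/
def rderiv {K : Type*} [Field K] (φ : RatFunc K) : RatFunc K :=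
  (algebraMap (Polynomial K) (RatFunc K) (Polynomial.derivative φ.num)
      * algebraMap (Polynomial K) (RatFunc K) φ.denom
    - algebraMap (Polynomial K) (RatFunc K) φ.num
      * algebraMap (Polynomial K) (RatFunc K) (Polynomial.derivative φ.denom))
    / (algebraMap (Polynomial K) (RatFunc K) φ.denom) ^ 2

/-- twisting family: `φ^m = ∏_{z≠0} (t−z)^{−⟨m,w_z⟩}`, for a finitely
supported family of vectors `w_z ∈ ℤⁿ`. -/
def phim {K : Type*} [Field K] {n : ℕ} (w : K →₀ (Fin n → ℤ)) (m : Fin n → ℤ) :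
    RatFunc K :=
  ∏ z ∈ w.support, (RatFunc.X - RatFunc.C z) ^ (-(pairZ m (w z)))

/-- `α_m = t·(φ^m)′/φ^m = −Σ_{z≠0} ⟨m,w_z⟩·t/(t−z)`. -/
def alpham {K : Type*} [Field K] {n : ℕ} (w : K →₀ (Fin n → ℤ)) (m : Fin n → ℤ) :
    RatFunc K :=
  -∑ z ∈ w.support, (pairZ m (w z) : RatFunc K) * RatFunc.X / (RatFunc.X - RatFunc.C z)

/-- Horizontal-type derivation `D` with marked point `z₀`, parameters
`(e, s, d, u)` and all other vertices `0`:
`f·χ^m ↦ q^s·(⟨m,u⟩·f + d·q·f′)·χ^{m+e}` with `q = t − z₀`. -/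
def DhorPt {K : Type*} [Field K] {n : ℕ} (z₀ : K) (e : Fin n → ℤ) (s d : ℤ)
    (u : Fin n → ℤ) (b : (Fin n → ℤ) →₀ RatFunc K) : (Fin n → ℤ) →₀ RatFunc K :=
  b.sum fun m f => Finsupp.single (m + e)
    ((RatFunc.X - RatFunc.C z₀) ^ s
      * ((pairZ m u : RatFunc K) * f
        + (d : RatFunc K) * (RatFunc.X - RatFunc.C z₀) * rderiv f))

/-- Horizontal-type derivation `E` with marked point `0`, parameters
`(e', s', d', u')` and twist family `w`:
`f·χ^m ↦ t^{s'}·φ^{e'}·(⟨m,u'⟩·f + d'·(t·f′ − α_m·f))·χ^{m+e'}`. -/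
def EhorTw {K : Type*} [Field K] {n : ℕ} (e' : Fin n → ℤ) (s' d' : ℤ)
    (u' : Fin n → ℤ) (w : K →₀ (Fin n → ℤ))
    (b : (Fin n → ℤ) →₀ RatFunc K) : (Fin n → ℤ) →₀ RatFunc K :=
  b.sum fun m f => Finsupp.single (m + e')
    ((RatFunc.X : RatFunc K) ^ s' * phim w e'
      * ((pairZ m u' : RatFunc K) * f
        + (d' : RatFunc K) * (RatFunc.X * rderiv f - alpham w m * f)))

section Derivative

open Polynomial

variable {K : Type*} [Field K]

theorem rderiv_div_algebraMap (p q : K[X]) (hq : q ≠ 0) :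
    rderiv (algebraMap K[X] (RatFunc K) p / algebraMap K[X] (RatFunc K) q) =
      algebraMap K[X] (RatFunc K) (derivative p * q - p * derivative q) /
        algebraMap K[X] (RatFunc K) q ^ 2 := by
  set f := algebraMap K[X] (RatFunc K) p / algebraMap K[X] (RatFunc K) q
  have hq₀ := RatFunc.algebraMap_ne_zero hq
  have hden₀ := RatFunc.algebraMap_ne_zero f.denom_ne_zero
  have hrepr : f.num * q = p * f.denom := by
    apply RatFunc.algebraMap_injective K
    rw [map_mul, map_mul, ← div_eq_div_iff hden₀ hq₀, RatFunc.num_div_denom]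
  have hderiv := congrArg derivative hrepr
  rw [derivative_mul, derivative_mul] at hderiv
  rw [rderiv, div_eq_div_iff (pow_ne_zero 2 hden₀) (pow_ne_zero 2 hq₀)]
  simp only [← map_mul, ← map_sub, ← map_pow]
  congr 1
  linear_combination (q * f.denom) * hderiv -
    (derivative f.denom * q + derivative q * f.denom) * hrepr

theorem rderiv_algebraMap (p : K[X]) :
    rderiv (algebraMap K[X] (RatFunc K) p) = algebraMap K[X] (RatFunc K) (derivative p) := by
  simpa using rderiv_div_algebraMap p 1 one_ne_zero

theorem rderiv_add (f g : RatFunc K) : rderiv (f + g) = rderiv f + rderiv g := by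
  induction f using RatFunc.induction_on with | f p q hq =>
  induction g using RatFunc.induction_on with | f p' q' hq' =>
  have hq₀ := RatFunc.algebraMap_ne_zero hq
  have hq₀' := RatFunc.algebraMap_ne_zero hq'
  rw [div_add_div _ _ hq₀ hq₀', ← map_mul, ← map_mul, ← map_mul, ← map_add,
    rderiv_div_algebraMap _ _ (mul_ne_zero hq hq'), rderiv_div_algebraMap _ _ hq,
    rderiv_div_algebraMap _ _ hq']
  simp only [map_add, map_mul, map_sub, derivative_mul]
  field_simp
  ring

theorem rderiv_mul (f g : RatFunc K) : rderiv (f * g) = rderiv f * g + f * rderiv g := by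
  induction f using RatFunc.induction_on with | f p q hq =>
  induction g using RatFunc.induction_on with | f p' q' hq' =>
  have hq₀ := RatFunc.algebraMap_ne_zero hq
  have hq₀' := RatFunc.algebraMap_ne_zero hq'
  rw [div_mul_div_comm, ← map_mul, ← map_mul, rderiv_div_algebraMap _ _ (mul_ne_zero hq hq'),
    rderiv_div_algebraMap _ _ hq, rderiv_div_algebraMap _ _ hq']
  simp only [map_add, map_mul, map_sub, derivative_mul]
  field_simp
  ring

@[simp]
theorem rderiv_C (a : K) : rderiv (RatFunc.C a) = 0 := by
  simpa using rderiv_algebraMap (C a)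

def rderivDerivation : Derivation K (RatFunc K) (RatFunc K) :=
  Derivation.mk'
    { toFun := rderiv
      map_add' := rderiv_add
      map_smul' := fun c f => by
        simp [Algebra.smul_def, rderiv_mul, RatFunc.algebraMap_eq_C, rderiv_C] }
    fun f g => by
      simp only [LinearMap.coe_mk, AddHom.coe_mk, smul_eq_mul, rderiv_mul]
      ring

@[simp]
theorem rderivDerivation_apply (f : RatFunc K) : rderivDerivation f = rderiv f := rfl

@[simp]
theorem rderiv_X : rderiv (RatFunc.X : RatFunc K) = 1 := by
  simpa using rderiv_algebraMap (Polynomial.X : K[X])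

@[simp]
theorem rderiv_zero : rderiv (0 : RatFunc K) = 0 :=
  (rderivDerivation (K := K)).map_zero

@[simp]
theorem rderiv_one : rderiv (1 : RatFunc K) = 0 :=
  (rderivDerivation (K := K)).map_one_eq_zero

@[simp]
theorem rderiv_intCast (c : ℤ) : rderiv (c : RatFunc K) = 0 :=
  (rderivDerivation (K := K)).map_intCast c

theorem rderiv_neg (f : RatFunc K) : rderiv (-f) = -rderiv f :=
  rderivDerivation.map_neg f

theorem rderiv_sub (f g : RatFunc K) : rderiv (f - g) = rderiv f - rderiv g :=
  rderivDerivation.map_sub f g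

theorem rderiv_div (f g : RatFunc K) :
    rderiv (f / g) = (rderiv f * g - f * rderiv g) / g ^ 2 := by
  have h := rderivDerivation.leibniz_div f g
  simp only [rderivDerivation_apply, smul_eq_mul] at h
  rw [h, inv_pow]
  ring

theorem rderiv_zpow (f : RatFunc K) (k : ℤ) : rderiv (f ^ k) = k * f ^ (k - 1) * rderiv f := by
  simpa [mul_assoc] using rderivDerivation.leibniz_zpow f k

end Derivative

namespace RatFunc

variable {K : Type*} [Field K]

theorem X_sub_C_ne_zero (z : K) : (X - C z : RatFunc K) ≠ 0 := by
  rw [← algebraMap_X, ← algebraMap_C, ← map_sub]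
  exact algebraMap_ne_zero (Polynomial.X_sub_C_ne_zero z)

end RatFunc

section LogDeriv

open RatFunc

variable {K : Type*} [Field K]

theorem X_mul_rderiv_zpow_X (k : ℤ) :
    X * rderiv ((X : RatFunc K) ^ k) = (k : RatFunc K) * X ^ k := by
  rw [rderiv_zpow, rderiv_X, zpow_sub_one₀ (X_ne_zero (K := K))]
  field_simp [X_ne_zero (K := K)]

theorem X_mul_rderiv_prod_zpow (S : Finset K) (c : K → ℤ) :
    X * rderiv (∏ z ∈ S, (X - C z) ^ c z) =
      (∑ z ∈ S, (c z : RatFunc K) * X / (X - C z)) * ∏ z ∈ S, (X - C z) ^ c z := by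
  classical
  induction S using Finset.induction_on with
  | empty => simp
  | insert z S hz ih =>
    rw [Finset.prod_insert hz, Finset.sum_insert hz, rderiv_mul, rderiv_zpow, rderiv_sub, rderiv_X,
      rderiv_C, zpow_sub_one₀ (X_sub_C_ne_zero z)]
    linear_combination (X - C z) ^ c z * ih

end LogDeriv

section Twist

open RatFunc

variable {K : Type*} [Field K] {n : ℕ}

theorem pairZ_add_left (m m' v : Fin n → ℤ) : pairZ (m + m') v = pairZ m v + pairZ m' v := by
  simp [pairZ, add_mul, Finset.sum_add_distrib]

@[simp]
theorem pairZ_zero_left (v : Fin n → ℤ) : pairZ 0 v = 0 := by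
  simp [pairZ]

theorem phim_ne_zero (w : K →₀ (Fin n → ℤ)) (m : Fin n → ℤ) : phim w m ≠ 0 :=
  Finset.prod_ne_zero_iff.2 fun z _ => zpow_ne_zero _ (X_sub_C_ne_zero z)

theorem X_mul_rderiv_phim (w : K →₀ (Fin n → ℤ)) (m : Fin n → ℤ) :
    X * rderiv (phim w m) = alpham w m * phim w m := by
  rw [phim, alpham, X_mul_rderiv_prod_zpow, ← Finset.sum_neg_distrib]
  push_cast
  simp only [neg_mul, neg_div]

theorem alpham_add (w : K →₀ (Fin n → ℤ)) (m m' : Fin n → ℤ) :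
    alpham w (m + m') = alpham w m + alpham w m' := by
  simp only [alpham, pairZ_add_left, Int.cast_add, add_mul, add_div, Finset.sum_add_distrib,
    neg_add]

@[simp]
theorem alpham_zero (w : K →₀ (Fin n → ℤ)) : alpham w 0 = 0 := by
  simp [alpham]

theorem alpham_of_support_eq_singleton {w : K →₀ (Fin n → ℤ)} {z₁ : K}
    (h : w.support = {z₁}) (m : Fin n → ℤ) :
    alpham w m = -((pairZ m (w z₁) : RatFunc K) * X / (X - C z₁)) := by
  rw [alpham, h, Finset.sum_singleton]

end Twist

theorem Finsupp.comp_comm_iff_forall_single {α M : Type*} [AddCommGroup M]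
    {F G : (α →₀ M) → (α →₀ M)} (hF : ∀ b₁ b₂, F (b₁ + b₂) = F b₁ + F b₂)
    (hG : ∀ b₁ b₂, G (b₁ + b₂) = G b₁ + G b₂) :
    (∀ b, F (G b) = G (F b)) ↔ ∀ a m, F (G (single a m)) = G (F (single a m)) := by
  refine ⟨fun h a m => h _, fun h b => ?_⟩
  have hext := Finsupp.addHom_ext (f := (AddMonoidHom.mk' F hF).comp (AddMonoidHom.mk' G hG))
    (g := (AddMonoidHom.mk' G hG).comp (AddMonoidHom.mk' F hF)) h
  exact DFunLike.congr_fun hext b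

section Derivations

open RatFunc

variable {K : Type*} [Field K] {n : ℕ}

theorem DhorPt_single (z₀ : K) (e : Fin n → ℤ) (s d : ℤ) (u m : Fin n → ℤ)
    (f : RatFunc K) :
    DhorPt z₀ e s d u (Finsupp.single m f) =
      Finsupp.single (m + e) ((X - C z₀) ^ s *
        ((pairZ m u : RatFunc K) * f + (d : RatFunc K) * (X - C z₀) * rderiv f)) := by
  rw [DhorPt, Finsupp.sum_single_index (by simp)]

theorem EhorTw_single (e' : Fin n → ℤ) (s' d' : ℤ) (u' : Fin n → ℤ)
    (w : K →₀ (Fin n → ℤ)) (m : Fin n → ℤ) (f : RatFunc K) :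
    EhorTw e' s' d' u' w (Finsupp.single m f) =
      Finsupp.single (m + e') ((X : RatFunc K) ^ s' * phim w e' *
        ((pairZ m u' : RatFunc K) * f + (d' : RatFunc K) * (X * rderiv f - alpham w m * f))) := by
  rw [EhorTw, Finsupp.sum_single_index (by simp)]

theorem DhorPt_add (z₀ : K) (e : Fin n → ℤ) (s d : ℤ) (u : Fin n → ℤ)
    (b₁ b₂ : (Fin n → ℤ) →₀ RatFunc K) :
    DhorPt z₀ e s d u (b₁ + b₂) = DhorPt z₀ e s d u b₁ + DhorPt z₀ e s d u b₂ := by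
  refine Finsupp.sum_add_index' (by simp) fun m f₁ f₂ => ?_
  rw [rderiv_add, ← Finsupp.single_add]
  congr 1
  ring

theorem EhorTw_add (e' : Fin n → ℤ) (s' d' : ℤ) (u' : Fin n → ℤ)
    (w : K →₀ (Fin n → ℤ)) (b₁ b₂ : (Fin n → ℤ) →₀ RatFunc K) :
    EhorTw e' s' d' u' w (b₁ + b₂) = EhorTw e' s' d' u' w b₁ + EhorTw e' s' d' u' w b₂ := by
  refine Finsupp.sum_add_index' (by simp) fun m f₁ f₂ => ?_
  rw [rderiv_add, ← Finsupp.single_add]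
  congr 1
  ring

variable (e : Fin n → ℤ) (s d : ℤ) (u e' : Fin n → ℤ) (s' : ℤ)
  (w : K →₀ (Fin n → ℤ))

theorem DhorPt_EhorTw_single_sub (hs : d * s = -1 - pairZ e u) (hs' : d * s' = -1 - pairZ e' u)
    (m : Fin n → ℤ) (f : RatFunc K) :
    DhorPt 0 e s d u (EhorTw e' s' d u w (Finsupp.single m f)) -
        EhorTw e' s' d u w (DhorPt 0 e s d u (Finsupp.single m f)) =
      Finsupp.single (m + e + e') ((d : RatFunc K) * X ^ s * X ^ s' * phim w e' *
        ((alpham w m * (1 - (d : RatFunc K) * alpham w e') -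
              (d : RatFunc K) * (X * rderiv (alpham w m)) +
            (pairZ m u : RatFunc K) * (alpham w e + alpham w e')) * f +
          (d : RatFunc K) * (alpham w e + alpham w e') * (X * rderiv f))) := by
  simp only [DhorPt_single, EhorTw_single, map_zero, sub_zero, ← Finsupp.single_sub,
    add_right_comm m e' e]
  congr 1
  have hsK : (d : RatFunc K) * s = -1 - pairZ e u := by rw [← Int.cast_mul, hs]; push_cast; ring
  have hsK' : (d : RatFunc K) * s' = -1 - pairZ e' u := by
    rw [← Int.cast_mul, hs']; push_cast; ring
  simp only [rderiv_mul, rderiv_add, rderiv_sub, rderiv_intCast, rderiv_X, alpham_add,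
    pairZ_add_left, Int.cast_add]
  linear_combination
    ((X : RatFunc K) ^ s * d * phim w e' * (pairZ m u * f + d * (X * rderiv f - alpham w m * f))) *
        X_mul_rderiv_zpow_X (K := K) s' +
      ((X : RatFunc K) ^ s * d * X ^ s' * (pairZ m u * f + d * (X * rderiv f - alpham w m * f))) *
        X_mul_rderiv_phim w e' -
      ((X : RatFunc K) ^ s' * phim w e' * d * (pairZ m u * f + d * X * rderiv f)) *
        X_mul_rderiv_zpow_X (K := K) s +
      ((X : RatFunc K) ^ s * phim w e' * X ^ s' *
        (pairZ m u * f + d * (X * rderiv f - alpham w m * f))) * hsK' -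
      ((X : RatFunc K) ^ s' * phim w e' * X ^ s * (pairZ m u * f + d * X * rderiv f)) * hsK

theorem DhorPt_EhorTw_commute_iff [CharZero K] (hd : d ≠ 0) (hs : d * s = -1 - pairZ e u)
    (hs' : d * s' = -1 - pairZ e' u) :
    (∀ b : (Fin n → ℤ) →₀ RatFunc K,
        DhorPt 0 e s d u (EhorTw e' s' d u w b) = EhorTw e' s' d u w (DhorPt 0 e s d u b)) ↔
      alpham w e + alpham w e' = 0 ∧
        ∀ m, alpham w m * (1 - (d : RatFunc K) * alpham w e') =
          (d : RatFunc K) * (X * rderiv (alpham w m)) := by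
  have hdK : (d : RatFunc K) ≠ 0 := Int.cast_ne_zero.2 hd
  have hX : (X : RatFunc K) ≠ 0 := X_ne_zero
  have hsingle : ∀ m f, DhorPt 0 e s d u (EhorTw e' s' d u w (Finsupp.single m f)) =
        EhorTw e' s' d u w (DhorPt 0 e s d u (Finsupp.single m f)) ↔
      (alpham w m * (1 - (d : RatFunc K) * alpham w e') -
            (d : RatFunc K) * (X * rderiv (alpham w m)) +
          (pairZ m u : RatFunc K) * (alpham w e + alpham w e')) * f +
        (d : RatFunc K) * (alpham w e + alpham w e') * (X * rderiv f) = 0 := by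
    intro m f
    rw [← sub_eq_zero, DhorPt_EhorTw_single_sub e s d u e' s' w hs hs', Finsupp.single_eq_zero,
      mul_eq_zero, or_iff_right]
    exact mul_ne_zero (mul_ne_zero (mul_ne_zero hdK (zpow_ne_zero _ hX)) (zpow_ne_zero _ hX))
      (phim_ne_zero w e')
  rw [Finsupp.comp_comm_iff_forall_single (DhorPt_add 0 e s d u) (EhorTw_add e' s' d u w)]
  simp only [hsingle]
  constructor
  · intro h
    have hB : alpham w e + alpham w e' = 0 := by simpa [hdK, hX] using h 0 X
    refine ⟨hB, fun m => ?_⟩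
    have hA := h m 1
    simp only [mul_one, rderiv_one, mul_zero, add_zero, hB] at hA
    exact sub_eq_zero.1 hA
  · rintro ⟨hB, hA⟩ m f
    linear_combination f * hA m + ((pairZ m u : RatFunc K) * f + d * (X * rderiv f)) * hB

end Derivations

namespace Polynomial

theorem coeff_X_mul_derivative {R : Type*} [Semiring R] (p : R[X]) (k : ℕ) :
    (X * derivative p).coeff k = k * p.coeff k := by
  cases k with
  | zero => simp
  | succ k => rw [coeff_X_mul, coeff_derivative, Nat.cast_comm]; push_cast; rfl

theorem mul_natDegree_eq_one_of_euler_eq {R : Type*} [CommRing R] [IsDomain R] [CharZero R]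
    {p : R[X]} {c : R} (hp : p.natDegree ≠ 0)
    (h : C c * (X * derivative (X * derivative p)) = X * derivative p) :
    c * p.natDegree = 1 := by
  have hcoeff := congrArg (coeff · p.natDegree) h
  simp only [coeff_C_mul, coeff_X_mul_derivative] at hcoeff
  have hlead : (p.natDegree : R) * p.leadingCoeff ≠ 0 :=
    mul_ne_zero (Nat.cast_ne_zero.2 hp) (leadingCoeff_ne_zero.2 (ne_zero_of_natDegree_gt
      (Nat.pos_of_ne_zero hp)))
  have : (p.natDegree * p.leadingCoeff) * (c * p.natDegree - 1) = 0 := by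
    rw [leadingCoeff]; linear_combination hcoeff
  exact sub_eq_zero.1 ((mul_eq_zero.1 this).resolve_left hlead)

end Polynomial

section Classification

open RatFunc

variable {K : Type*} [Field K]

theorem X_mul_rderiv_algebraMap (p : Polynomial K) :
    X * rderiv (algebraMap (Polynomial K) (RatFunc K) p) =
      algebraMap (Polynomial K) (RatFunc K) (Polynomial.X * Polynomial.derivative p) := by
  rw [rderiv_algebraMap, map_mul, algebraMap_X]

theorem mul_X_mul_rderiv_X_mul_rderiv_of_riccati {ψ β c : RatFunc K}
    (hψ : X * rderiv ψ = β * ψ) (hβ : c * (X * rderiv β + β ^ 2) = β) :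
    c * (X * rderiv (X * rderiv ψ)) = X * rderiv ψ := by
  rw [hψ, rderiv_mul]
  linear_combination ψ * hβ + c * β * hψ

theorem algebraMap_prod_X_sub_C_pow (S : Finset K) (a : K → ℤ) (ha : ∀ z ∈ S, 0 ≤ a z) :
    algebraMap (Polynomial K) (RatFunc K)
        (∏ z ∈ S, (Polynomial.X - Polynomial.C z) ^ (a z).toNat) =
      ∏ z ∈ S, (X - C z) ^ a z := by
  simp only [map_prod, map_pow, map_sub, algebraMap_X, algebraMap_C]
  refine Finset.prod_congr rfl fun z hz => ?_
  rw [← zpow_natCast, Int.toNat_of_nonneg (ha z hz)]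

theorem natDegree_prod_X_sub_C_pow (S : Finset K) (k : K → ℕ) :
    (∏ z ∈ S, (Polynomial.X - Polynomial.C z) ^ k z).natDegree = ∑ z ∈ S, k z := by
  rw [Polynomial.natDegree_prod_of_monic _ _ fun z _ => (Polynomial.monic_X_sub_C z).pow _]
  simp

variable {n : ℕ}

theorem support_eq_singleton_of_riccati [CharZero K] {w : K →₀ (Fin n → ℤ)}
    {e e' : Fin n → ℤ} {d : ℤ} (hpos : ∀ z ∈ w.support, 1 ≤ pairZ e (w z))
    (hne : w.support.Nonempty)
    (hB : alpham w e + alpham w e' = 0)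
    (hA : alpham w e * (1 - (d : RatFunc K) * alpham w e') =
      (d : RatFunc K) * (X * rderiv (alpham w e))) :
    d = 1 ∧ ∃ z₁, w.support = {z₁} ∧ pairZ e (w z₁) = 1 := by
  set S := w.support
  set k : K → ℕ := fun z => (pairZ e (w z)).toNat
  set ψ : Polynomial K := ∏ z ∈ S, (Polynomial.X - Polynomial.C z) ^ k z
  have hψ : X * rderiv (algebraMap (Polynomial K) (RatFunc K) ψ) =
      -alpham w e * algebraMap (Polynomial K) (RatFunc K) ψ := by
    rw [algebraMap_prod_X_sub_C_pow S _ fun z hz => by linarith [hpos z hz],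
      X_mul_rderiv_prod_zpow, alpham, neg_neg]
  have heuler := mul_X_mul_rderiv_X_mul_rderiv_of_riccati hψ (c := d) (by
    rw [rderiv_neg]
    linear_combination hA + (d * alpham w e) * hB)
  simp only [X_mul_rderiv_algebraMap, ← map_intCast (algebraMap (Polynomial K) (RatFunc K)),
    ← map_mul] at heuler
  have hdeg : ψ.natDegree = ∑ z ∈ S, k z := natDegree_prod_X_sub_C_pow S k
  have hcard : S.card ≤ ψ.natDegree := by
    rw [hdeg]
    simpa using Finset.card_nsmul_le_sum S k 1 fun z hz => by
      have := hpos z hz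
      simp only [k]
      omega
  have hdN : (d : K) * ψ.natDegree = 1 :=
    Polynomial.mul_natDegree_eq_one_of_euler_eq (by linarith [hne.card_pos])
      (by rw [Polynomial.C_eq_intCast]; exact RatFunc.algebraMap_injective K heuler)
  have hdN' : d * ψ.natDegree = 1 := by exact_mod_cast hdN
  have hN : ψ.natDegree = 1 := by
    exact_mod_cast Int.eq_one_of_mul_eq_one_left (by positivity) hdN'
  obtain ⟨z₁, hS⟩ := Finset.card_eq_one.1 (le_antisymm (hN ▸ hcard) hne.card_pos)
  refine ⟨by simpa [hN] using hdN', z₁, hS, ?_⟩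
  rw [hdeg, hS, Finset.sum_singleton] at hN
  have hk : (pairZ e (w z₁)).toNat = 1 := hN
  have := hpos z₁ (hS ▸ Finset.mem_singleton_self z₁)
  omega

theorem pairZ_eq_zero_of_alpham_eq_zero [CharZero K] {w : K →₀ (Fin n → ℤ)} {z₁ : K}
    (hS : w.support = {z₁}) {v : Fin n → ℤ} (h : alpham w v = 0) : pairZ v (w z₁) = 0 := by
  rw [alpham_of_support_eq_singleton hS, neg_eq_zero, mul_div_assoc] at h
  exact Int.cast_eq_zero.1 ((mul_eq_zero.1 h).resolve_right
    (div_ne_zero X_ne_zero (X_sub_C_ne_zero z₁)))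

theorem alpham_riccati_of_support_eq_singleton {w : K →₀ (Fin n → ℤ)} {z₁ : K}
    (hS : w.support = {z₁}) {e' : Fin n → ℤ} (he' : pairZ e' (w z₁) = -1)
    (m : Fin n → ℤ) :
    alpham w m * (1 - alpham w e') = X * rderiv (alpham w m) := by
  have hz := X_sub_C_ne_zero z₁
  simp only [alpham_of_support_eq_singleton hS, he', rderiv_neg, rderiv_div, rderiv_mul,
    rderiv_intCast, rderiv_X, rderiv_sub, rderiv_C]
  field_simp
  ring

theorem alpham_riccati_iff [CharZero K] {w : K →₀ (Fin n → ℤ)} (hw0 : w 0 = 0)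
    {e e' : Fin n → ℤ} {d : ℤ} (hpos : ∀ z : K, w z ≠ 0 → 1 ≤ pairZ e (w z)) :
    (alpham w e + alpham w e' = 0 ∧
        ∀ m, alpham w m * (1 - (d : RatFunc K) * alpham w e') =
          (d : RatFunc K) * (X * rderiv (alpham w m))) ↔
      (∀ z : K, w z = 0) ∨
        (d = 1 ∧ ∃ z₁ : K, z₁ ≠ 0 ∧ w z₁ ≠ 0 ∧ pairZ e (w z₁) = 1 ∧
          pairZ e' (w z₁) = -1 ∧ ∀ z : K, z ≠ z₁ → w z = 0) := by
  constructor
  · rintro ⟨hB, hA⟩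
    rcases w.support.eq_empty_or_nonempty with hS | hne
    · exact Or.inl fun z => by simp [Finsupp.support_eq_empty.1 hS]
    obtain ⟨hd, z₁, hS, he⟩ := support_eq_singleton_of_riccati
      (fun z hz => hpos z (Finsupp.mem_support_iff.1 hz)) hne hB (hA e)
    have hwz₁ : w z₁ ≠ 0 := Finsupp.mem_support_iff.1 (hS ▸ Finset.mem_singleton_self z₁)
    have he' := pairZ_eq_zero_of_alpham_eq_zero hS (v := e + e') (by rw [alpham_add, hB])
    rw [pairZ_add_left, he] at he'
    refine Or.inr ⟨hd, z₁, fun h => hwz₁ (h ▸ hw0), hwz₁, he, by omega, fun z hz => ?_⟩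
    exact Finsupp.notMem_support_iff.1 (by simpa [hS] using hz)
  · rintro (hzero | ⟨rfl, z₁, -, hwz₁, he, he', hother⟩)
    · obtain rfl : w = 0 := Finsupp.ext hzero
      simp [alpham]
    have hS : w.support = {z₁} := by
      ext z
      simp only [Finsupp.mem_support_iff, Finset.mem_singleton]
      exact ⟨fun hz => by_contra fun h => hz (hother z h), fun h => h ▸ hwz₁⟩
    refine ⟨?_, fun m => by simpa using alpham_riccati_of_support_eq_singleton hS he' m⟩
    simp only [alpham_of_support_eq_singleton hS, he, he']
    ring

end Classification

theorem adjacent_horizontal_derivations_commute_iff_general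
    {K : Type*} [Field K] [CharZero K] {n : ℕ}
    (e : Fin n → ℤ) (s d : ℤ) (hd : 0 < d) (u : Fin n → ℤ)
    (e' : Fin n → ℤ) (s' : ℤ) (w : K →₀ (Fin n → ℤ)) (hw0 : w 0 = 0)
    (hs : d * s = -1 - pairZ e u) (hs' : d * s' = -1 - pairZ e' u)
    (hcoh : ∀ z : K, w z ≠ 0 → 1 ≤ pairZ e (w z) ∧ pairZ e' (w z) ≤ -1) :
    (∀ b : (Fin n → ℤ) →₀ RatFunc K,
        DhorPt 0 e s d u (EhorTw e' s' d u w b)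
          = EhorTw e' s' d u w (DhorPt 0 e s d u b))
    ↔ (∀ z : K, w z = 0)
      ∨ (d = 1 ∧ ∃ z₁ : K, z₁ ≠ 0 ∧ w z₁ ≠ 0
          ∧ pairZ e (w z₁) = 1 ∧ pairZ e' (w z₁) = -1
          ∧ ∀ z : K, z ≠ z₁ → w z = 0) := by
  rw [DhorPt_EhorTw_commute_iff e s d u e' s' w hd.ne' hs hs',
    alpham_riccati_iff hw0 fun z hz => (hcoh z hz).1]

theorem adjacent_horizontal_derivations_commute_iff
    {K : Type*} [Field K] [IsAlgClosed K] [CharZero K] {n : ℕ} (hn : 1 ≤ n)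
    (e : Fin n → ℤ) (s d : ℤ) (hd : 0 < d) (u : Fin n → ℤ)
    (e' : Fin n → ℤ) (s' : ℤ) (w : K →₀ (Fin n → ℤ)) (hw0 : w 0 = 0)
    (hs : d * s = -1 - pairZ e u) (hs' : d * s' = -1 - pairZ e' u)
    (hcoh : ∀ z : K, w z ≠ 0 → 1 ≤ pairZ e (w z) ∧ pairZ e' (w z) ≤ -1) :
    (∀ b : (Fin n → ℤ) →₀ RatFunc K,
        DhorPt 0 e s d u (EhorTw e' s' d u w b)
          = EhorTw e' s' d u w (DhorPt 0 e s d u b))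
    ↔ (∀ z : K, w z = 0)
      ∨ (d = 1 ∧ ∃ z₁ : K, z₁ ≠ 0 ∧ w z₁ ≠ 0
          ∧ pairZ e (w z₁) = 1 ∧ pairZ e' (w z₁) = -1
          ∧ ∀ z : K, z ≠ z₁ → w z = 0) :=
  adjacent_horizontal_derivations_commute_iff_general e s d hd u e' s' w hw0 hs hs' hcoh
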